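/- arXiv:2412.06037 — 6 statements merged into one kernel-verified Lean document; each statement's English description precedes it below -/
import Mathlib

section
/- Let f : [0,1] → [0,1] be continuous. Suppose there exist points 0 ≤ z_l < z_r ≤ 1 such that f(f(z_l)) > z_r, f(z_r) < z_l, and f(z_l) > z_r. Then there exists a point x ∈ (z_l, z_r) such that f(x) < x < f(f(f(x))). -/
theorem stmt_0 (f : ℝ → ℝ)
    (hc : ContinuousOn f (Set.Icc 0 1))
    (hm : Set.MapsTo f (Set.Icc 0 1) (Set.Icc 0 1))
    (zl zr : ℝ) (h0 : 0 ≤ zl) (hlr : zl < zr) (h1 : zr ≤ 1)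
    (h2 : f (f zl) > zr) (h3 : f zr < zl) (h4 : f zl > zr) :
    ∃ x ∈ Set.Ioo zl zr, f x < x ∧ x < f (f (f x)) := by
  have hsub : Set.Icc zl zr ⊆ Set.Icc 0 1 :=
    Set.Icc_subset_Icc h0 h1
  have hc' : ContinuousOn f (Set.Icc zl zr) := hc.mono hsub
  have hzl : zl ∈ Set.Ioo (f zr) (f zl) := ⟨h3, lt_trans hlr h4⟩
  obtain ⟨x, hx, hfx⟩ := intermediate_value_Ioo' (le_of_lt hlr) hc' hzl
  exact ⟨x, hx, by rw [hfx]; exact hx.1, by rw [hfx]; exact lt_trans hx.2 h2⟩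
end

section
/- Let f : [0,1] → [0,1] be continuous. Suppose there exist points 0 ≤ z_l < z_r ≤ 1 such that f(f(z_l)) > z_r, f(z_r) > z_l, and f(z_l) < z_l. Then there exists a point x ∈ (z_l, z_r) such that f(x) < x < f(f(f(x))). -/
theorem stmt_1 (f : ℝ → ℝ)
    (hc : ContinuousOn f (Set.Icc 0 1))
    (hm : Set.MapsTo f (Set.Icc 0 1) (Set.Icc 0 1))
    (zl zr : ℝ) (h0 : 0 ≤ zl) (hlr : zl < zr) (h1 : zr ≤ 1)
    (h2 : f (f zl) > zr) (h3 : f zr > zl) (h4 : f zl < zl) :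
    ∃ x ∈ Set.Ioo zl zr, f x < x ∧ x < f (f (f x)) := by
  have hsub : Set.Icc zl zr ⊆ Set.Icc 0 1 :=
    Set.Icc_subset_Icc h0 h1
  have hiv := intermediate_value_Ioo hlr.le (hc.mono hsub)
  have hmem : zl ∈ Set.Ioo (f zl) (f zr) := ⟨h4, h3⟩
  obtain ⟨c, hc1, hc2⟩ := hiv hmem
  refine ⟨c, hc1, ?_, ?_⟩
  · rw [hc2]; exact hc1.1
  · rw [hc2]
    exact lt_trans hc1.2 h2
end

section
/- Let 0 < z_l < z_r < 1 and let f : [0,1] → [0,1] be the piecewise linear map f(x) = β₁(x − z_l) for x ∈ [0, z_l), f(x) = β₂(x − z_l) for x ∈ [z_l, z_r), f(x) = β₃(x − z_r) + β₂(z_r − z_l) for x ∈ [z_r, 1], with β₁ ∈ [−1/z_l, −z_r/z_l), β₂ ∈ (z_l/(z_r−z_l), 1/(z_r−z_l)], β₃ ∈ [−z_l/(1−z_r), 0). Then there exists a point x ∈ (z_l, z_r) such that f(x) < x < f(f(f(x))). -/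
set_option maxHeartbeats 1000000 in
theorem stmt_3 (zl zr β₁ β₂ β₃ : ℝ)
    (h0 : 0 < zl) (hlr : zl < zr) (h1 : zr < 1)
    (hβ₁ : β₁ ∈ Set.Ico (-1 / zl) (-zr / zl))
    (hβ₂ : β₂ ∈ Set.Ioc (zl / (zr - zl)) (1 / (zr - zl)))
    (hβ₃ : β₃ ∈ Set.Ico (-zl / (1 - zr)) 0)
    (f : ℝ → ℝ)
    (hf : ∀ x, f x = if x < zl then β₁ * (x - zl)
      else if x < zr then β₂ * (x - zl)
      else β₃ * (x - zr) + β₂ * (zr - zl)) :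
    ∃ x ∈ Set.Ioo zl zr, f x < x ∧ x < f (f (f x)) := by
  obtain ⟨hβ₁l, hβ₁r⟩ := hβ₁
  obtain ⟨hβ₂l, hβ₂r⟩ := hβ₂
  have hrl : (0:ℝ) < zr - zl := by linarith
  have hb2pos : 0 < β₂ := lt_trans (div_pos h0 hrl) hβ₂l
  have hb2ne : β₂ ≠ 0 := ne_of_gt hb2pos
  -- clear denominators in hypotheses
  have hβ₁l' : -1 ≤ β₁ * zl := by
    have h := mul_le_mul_of_nonneg_right hβ₁l h0.le
    have k : -1 / zl * zl = -1 := by field_simp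
    linarith
  have hβ₁r' : β₁ * zl < -zr := by
    have h := mul_lt_mul_of_pos_right hβ₁r h0
    have k : -zr / zl * zl = -zr := by field_simp
    linarith
  have hβ₂l' : zl < β₂ * (zr - zl) := by
    have h := mul_lt_mul_of_pos_right hβ₂l hrl
    have k : zl / (zr - zl) * (zr - zl) = zl := by field_simp
    linarith
  have hβ₁neg : β₁ < 0 := by nlinarith
  have hd : zl / β₂ < zr - zl := by
    rw [div_lt_iff₀ hb2pos]; nlinarith
  obtain ⟨m, hmdef⟩ : ∃ m : ℝ, m = min (zr - zl - zl / β₂) zl := ⟨_, rfl⟩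
  have hm1 : m ≤ zr - zl - zl / β₂ := hmdef ▸ min_le_left _ _
  have hm2 : m ≤ zl := hmdef ▸ min_le_right _ _
  have hmpos : 0 < m := hmdef ▸ lt_min (by linarith) h0
  have hεpos : 0 < zl ^ 2 * m / (2 * β₂) :=
    div_pos (by positivity) (by positivity)
  have hzl2m : zl ^ 2 * m < 2 * zl := by nlinarith
  have hεlt : zl ^ 2 * m / (2 * β₂) < zl / β₂ := by
    rw [div_lt_div_iff₀ (by positivity) hb2pos]
    nlinarith [mul_lt_mul_of_pos_right hzl2m hb2pos]
  obtain ⟨x, hxdef⟩ : ∃ x : ℝ, x = zl + zl / β₂ - zl ^ 2 * m / (2 * β₂) := ⟨_, rfl⟩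
  have hx1 : zl < x := by rw [hxdef]; linarith
  have hx2 : x < zr := by rw [hxdef]; linarith
  obtain ⟨y, hydef⟩ : ∃ y : ℝ, y = zl - zl ^ 2 * m / 2 := ⟨_, rfl⟩
  obtain ⟨w, hwdef⟩ : ∃ w : ℝ, w = -β₁ * zl ^ 2 * m / 2 := ⟨_, rfl⟩
  have hfx : f x = y := by
    rw [hf, if_neg (by push_neg; linarith), if_pos hx2, hxdef, hydef]
    field_simp
    ring
  have hy1 : y < zl := by
    rw [hydef]
    nlinarith [mul_pos (mul_pos h0 h0) hmpos]
  have hy0 : 0 < y := by rw [hydef]; nlinarith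
  have hfy : f y = w := by
    rw [hf, if_pos hy1, hydef, hwdef]; ring
  have hnb1 : (0:ℝ) < -β₁ := by linarith
  have hw0 : 0 < w := by
    rw [hwdef]
    have := mul_pos (mul_pos hnb1 (mul_pos h0 h0)) hmpos
    nlinarith
  have hw1 : w < zl := by
    rw [hwdef]
    have h5 : -β₁ * zl ≤ 1 := by linarith
    have h6 : (0:ℝ) < zl * m := mul_pos h0 hmpos
    have h7 : (-β₁ * zl) * (zl * m) ≤ 1 * (zl * m) :=
      mul_le_mul_of_nonneg_right h5 h6.le
    have h8 : -β₁ * zl ^ 2 * m = (-β₁ * zl) * (zl * m) := by ring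
    have h9 : zl * m ≤ zl * zl := mul_le_mul_of_nonneg_left hm2 h0.le
    have h10 : zl * zl < zl * 1 := mul_lt_mul_of_pos_left (by linarith) h0
    linarith
  have hfw : f w = β₁ * w - β₁ * zl := by
    rw [hf, if_pos hw1]; ring
  refine ⟨x, ⟨hx1, hx2⟩, ?_, ?_⟩
  · rw [hfx, hydef, hxdef]; linarith
  · rw [hfx, hfy, hfw]
    have hsq : (β₁ * zl) ^ 2 ≤ 1 := by nlinarith
    have hb1w : -m / 2 ≤ β₁ * w := by
      have key : β₁ * w = -((β₁ * zl) ^ 2) * m / 2 := by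
        rw [hwdef]; ring
      rw [key]
      nlinarith [mul_le_mul_of_nonneg_right hsq hmpos.le]
    have hxlt : x < zr - m / 2 := by rw [hxdef]; linarith
    linarith
end

section
/- Let p ∈ [1/5, 1/2] and define f : [0,1] → [0,1] by f(x) = x(1 + (4/p²)(1−x)(p−x)) for x ∈ [0,p) and f(x) = x(1 − (4/(1−p)²)(1−x)(x−p)) for x ∈ [p,1]. Then f is strictly increasing on [0, p/2], strictly decreasing on [p/2, (p+1)/2], and strictly increasing on [(p+1)/2, 1]. -/
/-!
Both branches of `f` are cubics of the form `x (1 + k (1 - x) (p - x))` with `k > 0`; they agree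
at the breakpoint `x = p`. Their derivatives factor as `(12/p²)(x - p/2)(x - (p+4)/6)` and
`(12/(1-p)²)(x - (p+1)/2)(x - (p+1)/6)`. For `p ≤ 4/5` the critical point `(p+4)/6` of the lower
branch lies beyond `p`, and for `p ≥ 1/5` the critical point `(p+1)/6` of the upper branch lies
before `p`, so on each side of `p` only the critical points `p/2` and `(p+1)/2` are seen.
The two decreasing pieces on `[p/2, p]` and `[p, (p+1)/2]` then glue at `p`.
-/

open Set

noncomputable def ppiBranch (k p x : ℝ) : ℝ := x * (1 + k * (1 - x) * (p - x))

theorem ppiBranch_self (k p : ℝ) : ppiBranch k p p = p := by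
  simp [ppiBranch]

theorem hasDerivAt_ppiBranch (k p x : ℝ) :
    HasDerivAt (ppiBranch k p) (1 + k * (3 * x ^ 2 - 2 * (1 + p) * x + p)) x := by
  have h : HasDerivAt (fun y => y * (1 + k * (1 - y) * (p - y)))
      (1 * (1 + k * (1 - x) * (p - x)) + x * (k * -1 * (p - x) + k * (1 - x) * -1)) x :=
    (hasDerivAt_id' x).mul <|
      ((((hasDerivAt_id' x).const_sub 1).const_mul k).mul
        ((hasDerivAt_id' x).const_sub p)).const_add 1
  exact h.congr_deriv (by ring)

theorem continuous_ppiBranch (k p : ℝ) : Continuous (ppiBranch k p) :=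
  continuous_iff_continuousAt.mpr fun x => (hasDerivAt_ppiBranch k p x).continuousAt

theorem deriv_ppiBranch_lower {p : ℝ} (hp : p ≠ 0) (x : ℝ) :
    deriv (ppiBranch (4 / p ^ 2) p) x = 12 / p ^ 2 * ((x - p / 2) * (x - (p + 4) / 6)) := by
  rw [(hasDerivAt_ppiBranch _ p x).deriv]
  field_simp
  ring

theorem deriv_ppiBranch_upper {p : ℝ} (hp : p ≠ 1) (x : ℝ) :
    deriv (ppiBranch (4 / (1 - p) ^ 2) p) x
      = 12 / (1 - p) ^ 2 * ((x - (p + 1) / 2) * (x - (p + 1) / 6)) := by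
  have : 1 - p ≠ 0 := sub_ne_zero.mpr hp.symm
  rw [(hasDerivAt_ppiBranch _ p x).deriv]
  field_simp
  ring

section Monotonicity

variable {p : ℝ}

theorem strictMonoOn_ppiBranch_lower (hp : p ≠ 0) (hp2 : p ≤ 2) :
    StrictMonoOn (ppiBranch (4 / p ^ 2) p) (Iic (p / 2)) := by
  refine strictMonoOn_of_deriv_pos (convex_Iic _) (continuous_ppiBranch _ p).continuousOn
    fun x hx => ?_
  rw [interior_Iic, mem_Iio] at hx
  rw [deriv_ppiBranch_lower hp]
  exact mul_pos (by positivity) (mul_pos_of_neg_of_neg (by linarith) (by linarith))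

theorem strictAntiOn_ppiBranch_lower (hp : p ≠ 0) (hp45 : p ≤ 4 / 5) :
    StrictAntiOn (ppiBranch (4 / p ^ 2) p) (Icc (p / 2) p) := by
  refine strictAntiOn_of_deriv_neg (convex_Icc _ _) (continuous_ppiBranch _ p).continuousOn
    fun x hx => ?_
  rw [interior_Icc, mem_Ioo] at hx
  rw [deriv_ppiBranch_lower hp]
  exact mul_neg_of_pos_of_neg (by positivity) (mul_neg_of_pos_of_neg (by linarith) (by linarith))

theorem strictAntiOn_ppiBranch_upper (hp : p ≠ 1) (hp15 : 1 / 5 ≤ p) :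
    StrictAntiOn (ppiBranch (4 / (1 - p) ^ 2) p) (Icc p ((p + 1) / 2)) := by
  have : 1 - p ≠ 0 := sub_ne_zero.mpr hp.symm
  refine strictAntiOn_of_deriv_neg (convex_Icc _ _) (continuous_ppiBranch _ p).continuousOn
    fun x hx => ?_
  rw [interior_Icc, mem_Ioo] at hx
  rw [deriv_ppiBranch_upper hp]
  exact mul_neg_of_pos_of_neg (by positivity) (mul_neg_of_neg_of_pos (by linarith) (by linarith))

theorem strictMonoOn_ppiBranch_upper (hp : p ≠ 1) (hp1 : -1 ≤ p) :
    StrictMonoOn (ppiBranch (4 / (1 - p) ^ 2) p) (Ici ((p + 1) / 2)) := by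
  have : 1 - p ≠ 0 := sub_ne_zero.mpr hp.symm
  refine strictMonoOn_of_deriv_pos (convex_Ici _) (continuous_ppiBranch _ p).continuousOn
    fun x hx => ?_
  rw [interior_Ici, mem_Ioi] at hx
  rw [deriv_ppiBranch_upper hp]
  exact mul_pos (by positivity) (mul_pos (by linarith) (by linarith))

end Monotonicity

theorem stmt_9 (p : ℝ) (hp : p ∈ Set.Icc (1/5 : ℝ) (1/2))
    (f : ℝ → ℝ)
    (hf : ∀ x, f x = if x < p then x * (1 + (4 / p^2) * (1 - x) * (p - x))
      else x * (1 - (4 / (1-p)^2) * (1 - x) * (x - p))) :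
    StrictMonoOn f (Set.Icc 0 (p/2)) ∧
    StrictAntiOn f (Set.Icc (p/2) ((p+1)/2)) ∧
    StrictMonoOn f (Set.Icc ((p+1)/2) 1) := by
  obtain ⟨hp15, hp12⟩ := hp
  have hp0 : p ≠ 0 := by positivity
  have hp1 : p ≠ 1 := by linarith
  have hlow : EqOn (ppiBranch (4 / p ^ 2) p) f (Iic p) := fun x (hx : x ≤ p) => by
    rw [hf]
    split_ifs with h
    · rfl
    · rw [le_antisymm hx (not_lt.mp h), ppiBranch_self]
      ring
  have hupp : EqOn (ppiBranch (4 / (1 - p) ^ 2) p) f (Ici p) := fun x (hx : p ≤ x) => by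
    rw [hf, if_neg (not_lt.mpr hx), ppiBranch]
    ring
  refine ⟨?_, ?_, ?_⟩
  · exact ((strictMonoOn_ppiBranch_lower hp0 (by linarith)).mono Icc_subset_Iic_self).congr
      (hlow.mono (Icc_subset_Iic_self.trans (Iic_subset_Iic.mpr (by linarith))))
  · rw [← Icc_union_Icc_eq_Icc (b := p) (by linarith) (by linarith)]
    exact ((strictAntiOn_ppiBranch_lower hp0 (by linarith)).congr
        (hlow.mono Icc_subset_Iic_self)).union
      ((strictAntiOn_ppiBranch_upper hp1 hp15).congr (hupp.mono Icc_subset_Ici_self))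
      (isGreatest_Icc (by linarith)) (isLeast_Icc (by linarith))
  · exact ((strictMonoOn_ppiBranch_upper hp1 (by linarith)).mono Icc_subset_Ici_self).congr
      (hupp.mono (Icc_subset_Ici_self.trans (Ici_subset_Ici.mpr (by linarith))))
end

section
/- Let p ∈ (0, 1/2) and δ ∈ (δ_p, 1], where δ_p = max{1/(p+1), (1/8)(p + 3 + √((−p³ − 4p² − 13p + 34)/(2 − p)))}. Define f : [0,1] → [0,1] by f(x) = x(1 + (4δ/p²)(1−x)(p−x)) for x ∈ [0,p) and f(x) = x(1 − (4δ/(1−p)²)(1−x)(x−p)) for x ∈ [p,1]. Then with z_l = p/2 and z_r = (p+1)/2 one has f(z_r) < z_l, f(z_l) > z_r, and f(f(z_l)) > z_r. -/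
lemma stmt_12_aux (p c : ℝ) (hp0 : 0 < p) (hp12 : p < 1/2) (hc0 : 0 < c) (hc1 : c ≤ 1 - p)
    (hM : 0 < (8-4*p)*(1+c)^2 + (p^2+p-6)*(1+c)*(2-p) + (p-1)*(2-p)^2) :
    0 < c*(1-p)^2*(2-p) - (1-p-c)*(c+1)*((c+1)^2-p^2) := by
  nlinarith [mul_pos hM hc0, mul_nonneg hM.le (sub_nonneg.2 hc1), mul_pos hM hp0,
    mul_pos hc0 hp0, sq_nonneg (c-p), sq_nonneg (1-p-c), mul_nonneg (sub_nonneg.2 hc1) hp0.le,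
    mul_pos (mul_pos hc0 hc0) hp0, sq_nonneg (c+p), mul_nonneg (mul_nonneg (sub_nonneg.2 hc1) hc0.le) hp0.le]

set_option maxHeartbeats 1000000 in
theorem stmt_12 (p δ : ℝ) (hp : p ∈ Set.Ioo (0:ℝ) (1/2))
    (hδ : δ ∈ Set.Ioc (max (1/(p+1))
      ((1/8) * (p + 3 + Real.sqrt ((-p^3 - 4*p^2 - 13*p + 34) / (2 - p))))) 1)
    (f : ℝ → ℝ)
    (hf : ∀ x, f x = if x < p then x * (1 + (4*δ / p^2) * (1 - x) * (p - x))
      else x * (1 - (4*δ / (1-p)^2) * (1 - x) * (x - p))) :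
    f ((p+1)/2) < p/2 ∧ f (p/2) > (p+1)/2 ∧ f (f (p/2)) > (p+1)/2 := by
  obtain ⟨hp0, hp12⟩ := hp
  obtain ⟨hδgt, hδ1⟩ := hδ
  have hp1 : p < 1 := by linarith
  have hpne : p ≠ 0 := ne_of_gt hp0
  have h1p : (1:ℝ) - p ≠ 0 := by intro h; linarith
  have h1ppos : (0:ℝ) < 1 - p := by linarith
  have h2p : (0:ℝ) < 2 - p := by linarith
  have hA : (0:ℝ) ≤ (-p^3 - 4*p^2 - 13*p + 34) / (2 - p) := by
    apply div_nonneg <;> nlinarith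
  have hs := Real.sq_sqrt hA
  have hsnn := Real.sqrt_nonneg ((-p^3 - 4*p^2 - 13*p + 34) / (2 - p))
  have h1 : 1/(p+1) < δ := lt_of_le_of_lt (le_max_left _ _) hδgt
  have h2 : (1/8) * (p + 3 + Real.sqrt ((-p^3 - 4*p^2 - 13*p + 34) / (2 - p))) < δ :=
    lt_of_le_of_lt (le_max_right _ _) hδgt
  have hδp : 1 < δ * (p+1) := by
    rw [div_lt_iff₀ (by linarith)] at h1; linarith
  have hδ0 : 0 < δ := by nlinarith
  have h83 : Real.sqrt ((-p^3 - 4*p^2 - 13*p + 34) / (2 - p)) < 8*δ - p - 3 := by linarith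
  have hkey : (-p^3 - 4*p^2 - 13*p + 34) / (2 - p) < (8*δ - p - 3)^2 := by
    nlinarith
  have hK : -p^3 - 4*p^2 - 13*p + 34 < (8*δ - p - 3)^2 * (2 - p) := by
    rw [div_lt_iff₀ h2p] at hkey; linarith [hkey]
  have hc0 : 0 < δ*(2-p) - 1 := by
    nlinarith [mul_nonneg hδ0.le (by linarith : (0:ℝ) ≤ 1 - 2*p)]
  have hc1 : δ*(2-p) - 1 ≤ 1 - p := by
    nlinarith [mul_nonneg h2p.le (by linarith : (0:ℝ) ≤ 1 - δ)]
  have hM2 : 0 < (8-4*p)*(1+(δ*(2-p)-1))^2 + (p^2+p-6)*(1+(δ*(2-p)-1))*(2-p)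
      + (p-1)*(2-p)^2 := by
    nlinarith [mul_pos (sub_pos.2 hK) (show (0:ℝ) < (2-p)^2 by positivity)]
  have hG := stmt_12_aux p (δ*(2-p)-1) hp0 hp12 hc0 hc1 hM2
  have hzl : f (p/2) = p/2 + δ*(2-p)/2 := by
    rw [hf, if_pos (by linarith)]
    field_simp
    ring
  have hy : p/2 + δ*(2-p)/2 > (p+1)/2 := by linarith [hc0]
  refine ⟨?_, ?_, ?_⟩
  · rw [hf, if_neg (by push_neg; linarith)]
    have e : 4*δ/(1-p)^2*(1-(p+1)/2)*((p+1)/2-p) = δ := by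
      field_simp; ring
    calc (p+1)/2 * (1 - 4*δ/(1-p)^2*(1-(p+1)/2)*((p+1)/2-p))
        = (p+1)/2 * (1 - δ) := by rw [e]
      _ < p/2 := by nlinarith
  · rw [hzl]; exact hy
  · rw [hzl, hf, if_neg (by push_neg; nlinarith)]
    rw [gt_iff_lt, ← sub_pos]
    have e3 : (p/2 + δ*(2-p)/2) * (1 - 4*δ/(1-p)^2 * (1 - (p/2 + δ*(2-p)/2)) * ((p/2 + δ*(2-p)/2) - p)) - (p+1)/2
        = ((δ*(2-p)-1)*(1-p)^2*(2-p) - (1-p-(δ*(2-p)-1))*((δ*(2-p)-1)+1)*(((δ*(2-p)-1)+1)^2-p^2))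
          / (2*(2-p)*(1-p)^2) := by
      field_simp; ring
    rw [e3]
    exact div_pos hG (mul_pos (by linarith : (0:ℝ) < 2*(2-p)) (pow_pos h1ppos 2))
end

section
/- Let 0 < z_l < z_r < 1 and β₂ ∈ ((1−z_l)/(z_r−z_l), 1/(z_r−z_l)]. Define f : [0,1] → [0,1] by f(x) = x/z_l for x ∈ [0, z_l), f(x) = 1 − β₂(x − z_l) for x ∈ [z_l, z_r), and f(x) = 1 − β₂(z_r − z_l)(1 − (x − z_r)/(1 − z_r)) for x ∈ [z_r, 1]. Then f is a well-defined continuous self-map of [0,1] with f(0) = 0, f(1) = 1, f(z_l) = 1, f(z_r) ∈ [0, z_l), and there exists a point x ∈ (z_l, z_r) with f(x) < x < f(f(f(x))). -/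
/-!
The middle lap of `f` falls linearly from `f zl = 1` to `f zr < zl`, so it passes through `zl`
at the point `p = zl + (1 - zl) / β₂`. The orbit of `p` is then `p ↦ zl ↦ 1 ↦ 1`, which gives
`f p = zl < p < 1 = f (f (f p))`.
-/

noncomputable section

def bimodalMap (zl zr β x : ℝ) : ℝ :=
  if x < zl then x / zl
  else if x < zr then 1 - β * (x - zl)
  else 1 - β * (zr - zl) * (1 - (x - zr) / (1 - zr))

namespace bimodalMap

variable {zl zr β : ℝ}

theorem apply_zero (h0 : 0 < zl) : bimodalMap zl zr β 0 = 0 := by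
  simp [bimodalMap, h0]

theorem apply_zl (hlr : zl < zr) : bimodalMap zl zr β zl = 1 := by
  simp [bimodalMap, hlr]

theorem apply_zr (hlr : zl < zr) : bimodalMap zl zr β zr = 1 - β * (zr - zl) := by
  simp [bimodalMap, hlr.not_gt]

theorem apply_one (hl : zl < 1) (hr : zr < 1) : bimodalMap zl zr β 1 = 1 := by
  simp only [bimodalMap, if_neg hl.not_gt, if_neg hr.not_gt]
  field_simp [sub_ne_zero.mpr hr.ne']
  ring

theorem continuous (h0 : zl ≠ 0) (hlr : zl < zr) : Continuous (bimodalMap zl zr β) := by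
  have hswap : bimodalMap zl zr β = fun x => if zl ≤ x then
      (if zr ≤ x then 1 - β * (zr - zl) * (1 - (x - zr) / (1 - zr)) else 1 - β * (x - zl))
      else x / zl := by
    funext x
    simp only [bimodalMap, ← not_le, ite_not]
  rw [hswap]
  refine Continuous.if_le ?_ (by fun_prop) continuous_const continuous_id ?_
  · exact Continuous.if_le (by fun_prop) (by fun_prop) continuous_const continuous_id
      fun x hx => by subst hx; simp
  · rintro x rfl
    simp [hlr.not_ge, h0]

theorem mapsTo_Icc (h0 : 0 < zl) (hlr : zl < zr) (h1 : zr < 1) (hβ : 0 ≤ β)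
    (hβ₁ : β * (zr - zl) ≤ 1) : Set.MapsTo (bimodalMap zl zr β) (Set.Icc 0 1) (Set.Icc 0 1) := by
  rintro x ⟨hx0, hx1⟩
  unfold bimodalMap
  split_ifs with hl hr
  · exact ⟨by positivity, (div_le_one h0).2 hl.le⟩
  · constructor <;> nlinarith
  · have hu : (x - zr) / (1 - zr) ∈ Set.Icc 0 1 :=
      ⟨div_nonneg (by linarith) (by linarith), (div_le_one (by linarith)).2 (by linarith)⟩
    have hc : 0 ≤ β * (zr - zl) := mul_nonneg hβ (by linarith)
    constructor <;> nlinarith [hu.1, hu.2]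

theorem crossing_mem_Ioo (hlr : zl < zr) (hl : zl < 1) (hβ : 1 - zl < β * (zr - zl)) :
    zl + (1 - zl) / β ∈ Set.Ioo zl zr := by
  have hβ0 : 0 < β := pos_of_mul_pos_left (by linarith) (by linarith : 0 ≤ zr - zl)
  refine ⟨by simp [div_pos (by linarith : 0 < 1 - zl) hβ0], ?_⟩
  have : (1 - zl) / β < zr - zl := (div_lt_iff₀' hβ0).2 hβ
  linarith

theorem apply_crossing (hβ : β ≠ 0) (hp : zl + (1 - zl) / β ∈ Set.Ioo zl zr) :
    bimodalMap zl zr β (zl + (1 - zl) / β) = zl := by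
  rw [bimodalMap, if_neg hp.1.not_gt, if_pos hp.2]
  field_simp
  ring

end bimodalMap

end

theorem stmt_16 (zl zr β₂ : ℝ)
    (h0 : 0 < zl) (hlr : zl < zr) (h1 : zr < 1)
    (hβ₂ : β₂ ∈ Set.Ioc ((1 - zl)/(zr - zl)) (1/(zr - zl)))
    (f : ℝ → ℝ)
    (hf : ∀ x, f x = if x < zl then x / zl
      else if x < zr then 1 - β₂ * (x - zl)
      else 1 - β₂ * (zr - zl) * (1 - (x - zr)/(1 - zr))) :
    ContinuousOn f (Set.Icc 0 1) ∧ Set.MapsTo f (Set.Icc 0 1) (Set.Icc 0 1) ∧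
    f 0 = 0 ∧ f 1 = 1 ∧ f zl = 1 ∧ f zr ∈ Set.Ico 0 zl ∧
    ∃ x ∈ Set.Ioo zl zr, f x < x ∧ x < f (f (f x)) := by
  obtain rfl : f = bimodalMap zl zr β₂ := funext hf
  have hz : 0 < zr - zl := sub_pos.2 hlr
  have hβl : 1 - zl < β₂ * (zr - zl) := (div_lt_iff₀ hz).1 hβ₂.1
  have hβu : β₂ * (zr - zl) ≤ 1 := (le_div_iff₀ hz).1 hβ₂.2
  have hl1 : zl < 1 := hlr.trans h1
  have hp := bimodalMap.crossing_mem_Ioo hlr hl1 hβl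
  have hβ0 : 0 < β₂ := pos_of_mul_pos_left (by linarith) hz.le
  refine ⟨(bimodalMap.continuous h0.ne' hlr).continuousOn,
    bimodalMap.mapsTo_Icc h0 hlr h1 hβ0.le hβu, bimodalMap.apply_zero h0,
    bimodalMap.apply_one hl1 h1, bimodalMap.apply_zl hlr, ?_, _, hp, ?_⟩
  · rw [bimodalMap.apply_zr hlr]
    constructor <;> linarith
  · rw [bimodalMap.apply_crossing hβ0.ne' hp, bimodalMap.apply_zl hlr,
      bimodalMap.apply_one hl1 h1]
    exact ⟨hp.1, hp.2.trans h1⟩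
end
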